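/- arXiv:1611.08515 — 4 statements merged into one kernel-verified Lean document; each statement's English description precedes it below -/
import Mathlib

section
/- Let ℓ ≥ 1, let a_1 < a_2 < ... < a_k be integers with a_i - a_{i-1} ≤ ℓ for all 2 ≤ i ≤ k, and let r_1, ..., r_k be positive integers with sum r. If (∑_{i=1}^k a_i·r_i)/r > ℓ(r-1)/2, then a_1 > 0. -/
lemma aux_sum (k : ℕ) (c : Fin k → ℕ) (h : ∀ i, 1 ≤ c i) :
    2 * ∑ i : Fin k, (i : ℕ) * c i + ∑ i : Fin k, c i ≤ (∑ i : Fin k, c i)^2 := by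
  induction k with
  | zero => simp
  | succ k ih =>
    rw [Fin.sum_univ_succ (fun i : Fin (k+1) => (i : ℕ) * c i), Fin.sum_univ_succ c]
    simp only [Fin.val_zero, Fin.val_succ]
    have := ih (c ∘ Fin.succ) (fun i => h _)
    simp only [Function.comp] at this
    have hs : ∑ i : Fin k, (↑i + 1) * c i.succ
        = ∑ i : Fin k, (i : ℕ) * c i.succ + ∑ i : Fin k, c i.succ := by
      rw [← Finset.sum_add_distrib]; exact Finset.sum_congr rfl fun i _ => by ring
    rw [hs]
    have h0 : 1 ≤ c 0 := h 0
    have hA : ∑ i : Fin k, c i.succ ≤ c 0 * ∑ i : Fin k, c i.succ :=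
      Nat.le_mul_of_pos_left _ h0
    have hB : c 0 ≤ c 0 ^ 2 := by nlinarith
    nlinarith [this, h0, hA, hB]

/-- Let `ℓ ≥ 1`, `a₁ < a₂ < … < a_k` integers with consecutive gaps at most `ℓ`,
and `r₁, …, r_k` positive integers with sum `r`.  If `(∑ aᵢ rᵢ)/r > ℓ(r-1)/2`
then `a₁ > 0`. -/
theorem stmt_1 (ℓ : ℤ) (hℓ : 1 ≤ ℓ) (k : ℕ) (hk : 0 < k)
    (a : Fin k → ℤ) (hmono : StrictMono a)
    (hgap : ∀ i j : Fin k, (j : ℕ) = (i : ℕ) + 1 → a j - a i ≤ ℓ)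
    (r : ℕ) (c : Fin k → ℕ) (hpos : ∀ i, 0 < c i) (hsum : ∑ i, c i = r)
    (hslope : ((∑ i, (a i : ℚ) * (c i : ℚ)) / (r : ℚ)) > (ℓ : ℚ) * ((r : ℚ) - 1) / 2) :
    0 < a ⟨0, hk⟩ := by
  have hr : 0 < r := by
    rw [← hsum]
    exact Finset.sum_pos (fun i _ => hpos i)
      (by simp [Finset.univ_nonempty_iff, Fin.pos_iff_nonempty.mp hk])
  have h1 : ∀ n (hn : n < k), a ⟨n, hn⟩ ≤ a ⟨0, hk⟩ + n * ℓ := by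
    intro n
    induction n with
    | zero => intro hn; simp
    | succ n ih =>
      intro hn
      have hn' : n < k := Nat.lt_of_succ_lt hn
      have hg := hgap ⟨n, hn'⟩ ⟨n + 1, hn⟩ rfl
      have := ih hn'
      push_cast
      linarith
  have h1' : ∀ i : Fin k, a i ≤ a ⟨0, hk⟩ + (i : ℕ) * ℓ := fun i => h1 i.1 i.2
  have hrq : (0 : ℚ) < (r : ℚ) := by exact_mod_cast hr
  rw [gt_iff_lt, div_lt_div_iff₀ (by norm_num : (0:ℚ) < 2) hrq] at hslope
  have hSQ : (∑ i, (a i : ℚ) * (c i : ℚ)) = ((∑ i, a i * (c i : ℤ) : ℤ) : ℚ) := by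
    push_cast; ring_nf
  rw [hSQ] at hslope
  have hs3 : ℓ * ((r : ℤ) - 1) * r < (∑ i, a i * (c i : ℤ)) * 2 := by
    exact_mod_cast hslope
  have hb : ∑ i, a i * (c i : ℤ)
      ≤ a ⟨0, hk⟩ * r + ℓ * ∑ i : Fin k, ((i : ℕ) : ℤ) * (c i : ℤ) := by
    calc ∑ i, a i * (c i : ℤ) ≤ ∑ i : Fin k, (a ⟨0, hk⟩ + (i : ℕ) * ℓ) * (c i : ℤ) :=
          Finset.sum_le_sum fun i _ =>
            mul_le_mul_of_nonneg_right (h1' i) (by positivity)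
      _ = a ⟨0, hk⟩ * (∑ i, (c i : ℤ)) + ℓ * ∑ i : Fin k, ((i : ℕ) : ℤ) * (c i : ℤ) := by
          rw [Finset.mul_sum, Finset.mul_sum, ← Finset.sum_add_distrib]
          exact Finset.sum_congr rfl fun i _ => by ring
      _ = a ⟨0, hk⟩ * r + ℓ * ∑ i : Fin k, ((i : ℕ) : ℤ) * (c i : ℤ) := by
          rw [show (∑ i, (c i : ℤ)) = (r : ℤ) by exact_mod_cast congrArg (Nat.cast : ℕ → ℤ) hsum]
  have haux := aux_sum k c (fun i => hpos i)
  rw [hsum] at haux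
  have h2 : 2 * ∑ i : Fin k, ((i : ℕ) : ℤ) * (c i : ℤ) ≤ (r : ℤ) * ((r : ℤ) - 1) := by
    have hle : r ≤ r * r := Nat.le_mul_of_pos_left r hr
    rw [pow_two] at haux
    have hn : 2 * ∑ i : Fin k, (i : ℕ) * c i ≤ r * r - r := by omega
    have h' : ((2 * ∑ i : Fin k, (i : ℕ) * c i : ℕ) : ℤ) ≤ ((r * r - r : ℕ) : ℤ) := by
      exact_mod_cast hn
    push_cast [Nat.cast_sub hle] at h'
    linarith
  nlinarith [hs3, hb, h2, hℓ, (show (0:ℤ) < r by exact_mod_cast hr)]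
end

section
/- Let ℓ ≥ 0 and let m : ℤ → ℕ be a function with finite support. Then ∑_{i,j ∈ ℤ} (−ℓ + 2·max(i−j+ℓ+1, 0) − 2·max(i−j+1, 0))·m_i·m_j = ∑_{|i−j| ≤ ℓ} m_i·m_j·(ℓ+1−|i−j|) − ∑_i m_i², that is, it equals −χ(m,m) where χ(m,m') = ∑_i m_i·m'_i − ∑_{|i−j| ≤ ℓ} m_i·m'_j·(ℓ+1−|i−j|). -/
/-- For `ℓ ≥ 0` and finitely supported `m : ℤ → ℕ`,
`∑_{i,j} (-ℓ + 2·max(i-j+ℓ+1,0) - 2·max(i-j+1,0))·mᵢ·mⱼ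
  = ∑_{|i-j|≤ℓ} mᵢ·mⱼ·(ℓ+1-|i-j|) - ∑ᵢ mᵢ²`, i.e. it equals `-χ(m,m)`. -/
theorem stmt_4 (ℓ : ℤ) (hℓ : 0 ≤ ℓ) (m : ℤ →₀ ℕ) :
    ∑ i ∈ m.support, ∑ j ∈ m.support,
        (-ℓ + 2 * max (i - j + ℓ + 1) 0 - 2 * max (i - j + 1) 0) * (m i : ℤ) * (m j : ℤ)
      = (∑ i ∈ m.support, ∑ j ∈ m.support,
          if |i - j| ≤ ℓ then (m i : ℤ) * (m j : ℤ) * (ℓ + 1 - |i - j|) else 0)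
        - ∑ i ∈ m.support, (m i : ℤ) ^ 2 := by
  set S := m.support with hS
  set f : ℤ → ℤ := fun d => -ℓ + 2 * max (d + ℓ + 1) 0 - 2 * max (d + 1) 0 with hf
  have key : ∀ d : ℤ, f d + f (-d)
      = 2 * ((if |d| ≤ ℓ then ℓ + 1 - |d| else 0) - (if d = 0 then 1 else 0)) := by
    intro d
    simp only [hf]
    rcases abs_cases d with ⟨h1, h2⟩ | ⟨h1, h2⟩ <;> rw [h1] <;> split_ifs <;> omega
  have L2 : (2 : ℤ) * ∑ i ∈ S, ∑ j ∈ S, f (i - j) * (m i : ℤ) * (m j : ℤ)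
      = 2 * ((∑ i ∈ S, ∑ j ∈ S,
          if |i - j| ≤ ℓ then (m i : ℤ) * (m j : ℤ) * (ℓ + 1 - |i - j|) else 0)
        - ∑ i ∈ S, (m i : ℤ) ^ 2) := by
    have swap : ∑ i ∈ S, ∑ j ∈ S, f (i - j) * (m i : ℤ) * (m j : ℤ)
        = ∑ i ∈ S, ∑ j ∈ S, f (j - i) * (m i : ℤ) * (m j : ℤ) := by
      rw [Finset.sum_comm]
      apply Finset.sum_congr rfl; intro i _
      apply Finset.sum_congr rfl; intro j _
      ring
    calc (2 : ℤ) * ∑ i ∈ S, ∑ j ∈ S, f (i - j) * (m i : ℤ) * (m j : ℤ)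
        = (∑ i ∈ S, ∑ j ∈ S, f (i - j) * (m i : ℤ) * (m j : ℤ))
          + ∑ i ∈ S, ∑ j ∈ S, f (j - i) * (m i : ℤ) * (m j : ℤ) := by
          rw [← swap]; ring
      _ = ∑ i ∈ S, ∑ j ∈ S, (f (i - j) + f (-(i - j))) * ((m i : ℤ) * (m j : ℤ)) := by
          rw [← Finset.sum_add_distrib]
          apply Finset.sum_congr rfl; intro i _
          rw [← Finset.sum_add_distrib]
          apply Finset.sum_congr rfl; intro j _
          have : -(i - j) = j - i := by ring
          rw [this]; ring
      _ = ∑ i ∈ S, ∑ j ∈ S, 2 * (((if |i - j| ≤ ℓ then ℓ + 1 - |i - j| else 0)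
            - (if i - j = 0 then 1 else 0)) * ((m i : ℤ) * (m j : ℤ))) := by
          apply Finset.sum_congr rfl; intro i _
          apply Finset.sum_congr rfl; intro j _
          rw [key]; ring
      _ = 2 * ((∑ i ∈ S, ∑ j ∈ S,
            if |i - j| ≤ ℓ then (m i : ℤ) * (m j : ℤ) * (ℓ + 1 - |i - j|) else 0)
          - ∑ i ∈ S, (m i : ℤ) ^ 2) := by
          simp only [← Finset.mul_sum]
          congr 1
          rw [← Finset.sum_sub_distrib]
          apply Finset.sum_congr rfl; intro i hi
          have hdiag : ∑ j ∈ S, ((if i - j = 0 then (1:ℤ) else 0) * ((m i : ℤ) * (m j : ℤ)))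
              = (m i : ℤ) ^ 2 := by
            have : ∀ j ∈ S, (if i - j = 0 then (1:ℤ) else 0) * ((m i : ℤ) * (m j : ℤ))
                = if j = i then (m i : ℤ) * (m j : ℤ) else 0 := by
              intro j _
              by_cases h : j = i <;> simp [h, sub_eq_zero]
              · intro h'; exact absurd h'.symm h
            rw [Finset.sum_congr rfl this, Finset.sum_ite_eq' S i (fun j => (m i : ℤ) * (m j : ℤ))]
            simp [hi]; ring
          rw [← hdiag, ← Finset.sum_sub_distrib]
          apply Finset.sum_congr rfl; intro j _
          split_ifs with h <;> ring
  have := mul_left_cancel₀ (two_ne_zero) L2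
  simpa [hf] using this
end

section
/- Let ℓ ≥ 1 and let m : ℤ → ℕ be finitely supported with support a_1 < a_2 < ... < a_k satisfying a_i − a_{i−1} ≤ ℓ for all i. Set r = ∑_i m_{a_i} and d = ∑_i a_i·m_{a_i}. If d/r > ℓ(r−1)/2, then a_1 > 0, and hence m_i = 0 for all i ≤ 0. -/
/-- Gap lemma: if `ℓ ≥ 1` and `m : ℤ → ℕ` is finitely supported and nonzero, with all
consecutive gaps in its support of length at most `ℓ`, and if the slope
`d(m)/r(m) > ℓ(r(m)-1)/2`, then the smallest support element is positive,
hence `mᵢ = 0` for all `i ≤ 0`. -/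
theorem stmt_10 (ℓ : ℤ) (hℓ : 1 ≤ ℓ) (m : ℤ →₀ ℕ) (hm : m ≠ 0)
    (hgap : ∀ s ∈ m.support, ∀ t ∈ m.support, s < t →
      (∀ x ∈ m.support, ¬(s < x ∧ x < t)) → t - s ≤ ℓ)
    (r : ℕ) (d : ℤ)
    (hr : r = ∑ i ∈ m.support, m i) (hd : d = ∑ i ∈ m.support, i * (m i : ℤ))
    (hslope : (d : ℚ) / (r : ℚ) > (ℓ : ℚ) * ((r : ℚ) - 1) / 2) :
    (∀ x ∈ m.support, 0 < x) ∧ ∀ i : ℤ, i ≤ 0 → m i = 0 := by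
  classical
  have hℓ0 : (0:ℤ) ≤ ℓ := by linarith
  have hne : m.support.Nonempty := Finsupp.support_nonempty_iff.mpr hm
  set S := m.support with hS
  set a := S.min' hne with ha
  set M : ℤ → ℤ := fun x => (m x : ℤ) with hMdef
  have hmem1 : ∀ x ∈ S, 1 ≤ M x := by
    intro x hx
    have : m x ≠ 0 := Finsupp.mem_support_iff.mp hx
    have : 1 ≤ m x := Nat.one_le_iff_ne_zero.mpr this
    show (1:ℤ) ≤ (m x : ℤ)
    exact_mod_cast this
  set R : ℤ := ∑ y ∈ S, M y with hRdef
  have hRr : R = (r : ℤ) := by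
    rw [hRdef, hr]; push_cast; rfl
  have hR1 : 1 ≤ R := by
    have h := Finset.single_le_sum (f := M) (fun i hi => le_trans zero_le_one (hmem1 i hi))
      (S.min'_mem hne)
    exact le_trans (hmem1 _ (S.min'_mem hne)) h
  have hrpos : (0:ℚ) < (r:ℚ) := by
    have : (1:ℤ) ≤ (r:ℤ) := hRr ▸ hR1
    have : (1:ℚ) ≤ (r:ℚ) := by exact_mod_cast this
    linarith
  -- slope condition in ℤ : ℓ * (R - 1) * R < 2 * d
  have hslope2 : ℓ * (R - 1) * R < 2 * d := by
    rw [gt_iff_lt, div_lt_div_iff₀ (by norm_num) hrpos] at hslope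
    have h : (ℓ:ℚ) * ((r:ℚ) - 1) * (r:ℚ) < (d:ℚ) * 2 := hslope
    have h' : ℓ * ((r:ℤ) - 1) * (r:ℤ) < d * 2 := by exact_mod_cast h
    rw [hRr]; linarith
  set C : ℤ → ℤ := fun x => ∑ y ∈ S.filter (· < x), M y with hCdef
  set D : ℤ → ℤ := fun x => ∑ y ∈ S.filter (x < ·), M y with hDdef
  -- key gap estimate by strong induction on the number of support elements below x
  have key : ∀ n : ℕ, ∀ x ∈ S, (S.filter (· < x)).card = n → x - a ≤ ℓ * n := by
    intro n
    induction n using Nat.strong_induction_on with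
    | _ n ih =>
      intro x hx hcard
      rcases eq_or_lt_of_le (Finset.min'_le S x hx) with heq | hlt
      · rw [← ha] at heq
        rw [← heq, sub_self]
        positivity
      · rw [← ha] at hlt
        have hfne : (S.filter (· < x)).Nonempty :=
          ⟨a, Finset.mem_filter.mpr ⟨S.min'_mem hne, hlt⟩⟩
        set b := (S.filter (· < x)).max' hfne with hb
        have hbmem := (S.filter (· < x)).max'_mem hfne
        have hbs : b ∈ S := (Finset.mem_filter.mp hbmem).1
        have hbx : b < x := (Finset.mem_filter.mp hbmem).2
        have hstep : x - b ≤ ℓ := by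
          refine hgap b hbs x hx hbx ?_
          rintro y hy ⟨h1, h2⟩
          have hy' : y ∈ S.filter (· < x) := Finset.mem_filter.mpr ⟨hy, h2⟩
          have := Finset.le_max' _ y hy'
          omega
        have hsub : S.filter (· < b) ⊆ (S.filter (· < x)).erase b := by
          intro y hy
          rcases Finset.mem_filter.mp hy with ⟨hys, hyb⟩
          exact Finset.mem_erase.mpr ⟨by omega, Finset.mem_filter.mpr ⟨hys, by omega⟩⟩
        have hcard' : (S.filter (· < b)).card < n := by
          calc (S.filter (· < b)).card ≤ ((S.filter (· < x)).erase b).card :=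
                Finset.card_le_card hsub
            _ < (S.filter (· < x)).card := Finset.card_erase_lt_of_mem hbmem
            _ = n := hcard
        have hih := ih _ hcard' b hbs rfl
        have hcast : ((S.filter (· < b)).card : ℤ) + 1 ≤ (n:ℤ) := by exact_mod_cast hcard'
        nlinarith [mul_le_mul_of_nonneg_left hcast hℓ0]
  -- card of smaller support elements is at most the weighted count C x
  have hcardC : ∀ x, ((S.filter (· < x)).card : ℤ) ≤ C x := by
    intro x
    have : ((S.filter (· < x)).card : ℤ) = ∑ _y ∈ S.filter (· < x), (1:ℤ) := by
      simp
    rw [this, hCdef]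
    exact Finset.sum_le_sum fun y hy => hmem1 y (Finset.mem_filter.mp hy).1
  have hxbound : ∀ x ∈ S, x ≤ a + ℓ * C x := by
    intro x hx
    have h1 := key _ x hx rfl
    have h2 := mul_le_mul_of_nonneg_left (hcardC x) hℓ0
    linarith
  -- the symmetric-sum identity
  have hsym : ∑ x ∈ S, M x * C x = ∑ x ∈ S, M x * D x := by
    have h1 : ∀ x, M x * C x = ∑ y ∈ S, if y < x then M x * M y else 0 := by
      intro x
      rw [hCdef, Finset.mul_sum, ← Finset.sum_filter]
    have h2 : ∀ y, M y * D y = ∑ x ∈ S, if y < x then M x * M y else 0 := by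
      intro y
      rw [hDdef, Finset.mul_sum, ← Finset.sum_filter]
      exact Finset.sum_congr rfl fun x _ => mul_comm _ _
    calc ∑ x ∈ S, M x * C x = ∑ x ∈ S, ∑ y ∈ S, if y < x then M x * M y else 0 :=
          Finset.sum_congr rfl fun x _ => h1 x
      _ = ∑ y ∈ S, ∑ x ∈ S, if y < x then M x * M y else 0 := Finset.sum_comm
      _ = ∑ y ∈ S, M y * D y := Finset.sum_congr rfl fun y _ => (h2 y).symm
  -- partition: C x + M x + D x = R for x ∈ S
  have hpart : ∀ x ∈ S, C x + M x + D x = R := by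
    intro x hx
    have hsplit := Finset.sum_filter_add_sum_filter_not S (· < x) M
    have hfilter : S.filter (fun y => ¬ y < x) = insert x (S.filter (x < ·)) := by
      ext y
      simp only [Finset.mem_filter, Finset.mem_insert, not_lt]
      constructor
      · rintro ⟨hyS, hxy⟩
        rcases eq_or_lt_of_le hxy with h | h
        · exact Or.inl h.symm
        · exact Or.inr ⟨hyS, h⟩
      · rintro (rfl | ⟨hyS, h⟩)
        · exact ⟨hx, le_refl _⟩
        · exact ⟨hyS, le_of_lt h⟩
    have hnotmem : x ∉ S.filter (x < ·) := by
      simp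
    rw [hfilter, Finset.sum_insert hnotmem] at hsplit
    rw [hRdef, ← hsplit, hCdef, hDdef]
    ring
  -- square identity
  have hsq : 2 * (∑ x ∈ S, M x * C x) + (∑ x ∈ S, M x * M x) = R * R := by
    have : R * R = ∑ x ∈ S, M x * R := by
      rw [← Finset.sum_mul, hRdef]
    rw [this]
    have : ∑ x ∈ S, M x * R = ∑ x ∈ S, (M x * C x + M x * M x + M x * D x) := by
      refine Finset.sum_congr rfl fun x hx => ?_
      rw [← hpart x hx]; ring
    rw [this, Finset.sum_add_distrib, Finset.sum_add_distrib, ← hsym]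
    ring
  have hQR : R ≤ ∑ x ∈ S, M x * M x := by
    rw [hRdef]
    exact Finset.sum_le_sum fun x hx => le_mul_of_one_le_left
      (le_trans zero_le_one (hmem1 x hx)) (hmem1 x hx)
  -- degree bound
  have hdbound : d ≤ a * R + ℓ * (∑ x ∈ S, M x * C x) := by
    rw [hd]
    have h1 : ∑ i ∈ S, i * M i ≤ ∑ i ∈ S, (a + ℓ * C i) * M i := by
      refine Finset.sum_le_sum fun i hi => ?_
      exact mul_le_mul_of_nonneg_right (hxbound i hi)
        (le_trans zero_le_one (hmem1 i hi))
    have h2 : ∑ i ∈ S, (a + ℓ * C i) * M i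
        = a * R + ℓ * (∑ x ∈ S, M x * C x) := by
      rw [hRdef, Finset.mul_sum, Finset.mul_sum, ← Finset.sum_add_distrib]
      refine Finset.sum_congr rfl fun i _ => ?_
      ring
    calc ∑ i ∈ S, i * M i ≤ ∑ i ∈ S, (a + ℓ * C i) * M i := h1
      _ = a * R + ℓ * (∑ x ∈ S, M x * C x) := h2
  -- conclude a > 0
  have hapos : 0 < a := by
    set T := ∑ x ∈ S, M x * C x with hT
    have h2T : 2 * T ≤ R * R - R := by nlinarith
    by_contra hneg
    push_neg at hneg
    have haR : a * R ≤ 0 := mul_nonpos_of_nonpos_of_nonneg hneg (by linarith)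
    nlinarith [mul_le_mul_of_nonneg_left h2T hℓ0]
  have hpos : ∀ x ∈ S, 0 < x := fun x hx => lt_of_lt_of_le hapos (S.min'_le x hx)
  refine ⟨hpos, fun i hi => ?_⟩
  by_contra hzero
  have : i ∈ S := Finsupp.mem_support_iff.mpr hzero
  exact absurd (hpos i this) (not_lt.mpr hi)
end

section
/- Let m : ℤ → ℕ be finitely supported with r(m) = ∑ m_i and d(m) = ∑ i·m_i, and suppose r(m) = r ≥ 1 and d(m) = d with d > ℓ·r(r−1)/2 for some ℓ ≥ 0. If m_i = 0 for all i ≤ 0 fails, i.e. m_j > 0 for some j ≤ 0, and the support of m has all consecutive gaps ≤ ℓ, then we reach a contradiction; hence under the gap condition the support lies in ℤ_{>0}. -/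
/-!
Spread the mass of `m` out as `r` points on the line, `mᵢ` copies at each `i`. Consecutive
points are at distance at most `ℓ`, so the `k`-th point lies within `ℓ (k - 1)` of the smallest
one, and summing gives `2 d ≤ 2 r · min (supp m) + ℓ r (r - 1)`. A point of the support at or
below `0` makes the first term nonpositive, contradicting `2 d > ℓ r (r - 1)`.
-/

open Finset

variable {α : Type*}

def Finset.HasGapsAtMost [LinearOrder α] [Sub α] (s : Finset α) (ℓ : α) : Prop :=
  ∀ a ∈ s, ∀ b ∈ s, a < b → (∀ x ∈ s, ¬(a < x ∧ x < b)) → b - a ≤ ℓ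

namespace Finset.HasGapsAtMost

section LinearOrder

variable [LinearOrder α] [Sub α] {s : Finset α} {ℓ b : α}

theorem of_insert_of_forall_lt (h : (insert b s).HasGapsAtMost ℓ) (hb : ∀ x ∈ s, x < b) :
    s.HasGapsAtMost ℓ := by
  intro a ha c hc hac hno
  refine h a (mem_insert_of_mem ha) c (mem_insert_of_mem hc) hac ?_
  intro x hx
  rcases mem_insert.mp hx with rfl | hx
  · exact fun hxc => (hb c hc).not_gt hxc.2
  · exact hno x hx

theorem sub_max'_le (h : (insert b s).HasGapsAtMost ℓ) (hb : ∀ x ∈ s, x < b)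
    (hs : s.Nonempty) : b - s.max' hs ≤ ℓ := by
  refine h _ (mem_insert_of_mem (s.max'_mem hs)) b (mem_insert_self _ _)
    (hb _ (s.max'_mem hs)) ?_
  rintro x hx ⟨hlt, hgt⟩
  rcases mem_insert.mp hx with rfl | hx
  · exact hgt.false
  · exact hlt.not_ge (s.le_max' x hx)

end LinearOrder

section OrderedRing

variable [CommRing α] [LinearOrder α] [IsStrictOrderedRing α] {s : Finset α} {ℓ b : α}

theorem max'_le (h : s.HasGapsAtMost ℓ) (hs : s.Nonempty) :
    s.max' hs ≤ s.min' hs + ℓ * (#s - 1) := by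
  induction s using Finset.induction_on_max with
  | empty => exact absurd hs not_nonempty_empty
  | insert b s hb ih =>
    obtain rfl | hs' := s.eq_empty_or_nonempty
    · simp
    have hbs : b ∉ s := fun hb' => (hb b hb').false
    have hmax := ih (h.of_insert_of_forall_lt hb) hs'
    have hgap := h.sub_max'_le hb hs'
    rw [max'_insert b s hs', min'_insert b s hs', max_eq_left (hb _ (s.max'_mem hs')).le,
      min_eq_right (hb _ (s.min'_mem hs')).le, card_insert_of_notMem hbs]
    push_cast
    linarith

theorem two_mul_sum_mul_le (h : s.HasGapsAtMost ℓ) (hℓ : 0 ≤ ℓ) {f : α → α}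
    (hf : ∀ i ∈ s, 1 ≤ f i) (hs : s.Nonempty) :
    2 * ∑ i ∈ s, i * f i ≤
      2 * s.min' hs * ∑ i ∈ s, f i + ℓ * (∑ i ∈ s, f i) * (∑ i ∈ s, f i - 1) := by
  induction s using Finset.induction_on_max with
  | empty => exact absurd hs not_nonempty_empty
  | insert b s hb ih =>
    have hbs : b ∉ s := fun hb' => (hb b hb').false
    have hB : 1 ≤ f b := hf b (mem_insert_self b s)
    have hBB : 0 ≤ ℓ * (f b * (f b - 1)) := mul_nonneg hℓ (mul_nonneg (by linarith) (by linarith))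
    rw [sum_insert hbs, sum_insert hbs]
    obtain rfl | hs' := s.eq_empty_or_nonempty
    · simp only [sum_empty, insert_empty_eq, min'_singleton]
      linarith
    have hgaps := h.of_insert_of_forall_lt hb
    have ih := ih hgaps (fun i hi => hf i (mem_insert_of_mem hi)) hs'
    have hcard : (#s : α) ≤ ∑ i ∈ s, f i := by
      simpa using card_nsmul_le_sum s f 1 (fun i hi => hf i (mem_insert_of_mem hi))
    -- the new maximum `b` is at most `ℓ` above `max' s`, hence within `ℓ · #s ≤ ℓ · ∑ f` of `min' s`
    have hb_le : b ≤ s.min' hs' + ℓ * ∑ i ∈ s, f i := by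
      have := hgaps.max'_le hs'
      have := h.sub_max'_le hb hs'
      linarith [mul_le_mul_of_nonneg_left hcard hℓ]
    have hbB := mul_le_mul_of_nonneg_right hb_le (zero_le_one.trans hB)
    rw [min'_insert b s hs', min_eq_right (hb _ (s.min'_mem hs')).le]
    linarith

end OrderedRing

end Finset.HasGapsAtMost

theorem stmt_12_general (ℓ : ℤ) (hℓ : 0 ≤ ℓ) (m : ℤ →₀ ℕ)
    (hgap : ∀ s ∈ m.support, ∀ t ∈ m.support, s < t →
      (∀ x ∈ m.support, ¬(s < x ∧ x < t)) → t - s ≤ ℓ)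
    (r : ℕ) (d : ℤ)
    (hr : r = ∑ i ∈ m.support, m i) (hd : d = ∑ i ∈ m.support, i * (m i : ℤ))
    (hslope : 2 * d > ℓ * (r : ℤ) * ((r : ℤ) - 1))
    (hneg : ∃ j : ℤ, j ≤ 0 ∧ 0 < m j) :
    False := by
  obtain ⟨j, hj0, hj⟩ := hneg
  have hj_mem : j ∈ m.support := Finsupp.mem_support_iff.mpr hj.ne'
  have hm_pos : ∀ i ∈ m.support, 1 ≤ (m i : ℤ) := fun i hi => by
    simpa [Nat.one_le_iff_ne_zero] using hi
  have hr' : (r : ℤ) = ∑ i ∈ m.support, (m i : ℤ) := by rw [hr]; push_cast; rfl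
  have key := HasGapsAtMost.two_mul_sum_mul_le hgap hℓ hm_pos ⟨j, hj_mem⟩
  rw [← hr', ← hd] at key
  have hmin : m.support.min' ⟨j, hj_mem⟩ * r ≤ 0 :=
    mul_nonpos_of_nonpos_of_nonneg ((min'_le _ _ hj_mem).trans hj0) (Nat.cast_nonneg r)
  linarith

/-- Lemma 3.3, combinatorial form: a finitely supported `m : ℤ → ℕ` with all
consecutive gaps in its support at most `ℓ`, rank `r ≥ 1` and degree
`d > ℓ·r(r-1)/2` cannot have `mⱼ > 0` for some `j ≤ 0`; hence the support lies
in the positive integers. -/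
theorem stmt_12 (ℓ : ℤ) (hℓ : 0 ≤ ℓ) (m : ℤ →₀ ℕ)
    (hgap : ∀ s ∈ m.support, ∀ t ∈ m.support, s < t →
      (∀ x ∈ m.support, ¬(s < x ∧ x < t)) → t - s ≤ ℓ)
    (r : ℕ) (d : ℤ)
    (hr : r = ∑ i ∈ m.support, m i) (hd : d = ∑ i ∈ m.support, i * (m i : ℤ))
    (hr1 : 1 ≤ r) (hslope : 2 * d > ℓ * (r : ℤ) * ((r : ℤ) - 1))
    (hneg : ∃ j : ℤ, j ≤ 0 ∧ 0 < m j) :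
    False :=
  stmt_12_general ℓ hℓ m hgap r d hr hd hslope hneg
end
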